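/- arXiv:2307.12892 — 3 statements merged into one kernel-verified Lean document; each statement's English description precedes it below -/
import Mathlib

section
/- Let X ∈ R^p be a mean-zero square-integrable random vector with covariance Σ, let U ⊂ [p], and let i ∉ U. Define the residual covariance Σ_{R(U)} = Σ − Σ_{•U} Σ_U⁺ Σ_{U•} and β = (Σ_{R(U)})_{•i}. Then Σ_{R(U∪{i})} = Σ_{R(U)} − (ββᵀ/β_i)·1{β_i > 0}, where Σ_{R(U∪{i})} = Σ − Σ_{•,U∪{i}} Σ_{U∪{i}}⁺ Σ_{U∪{i},•} and 1{·} is the indicator. -/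
open MeasureTheory Matrix

/-- Moore–Penrose pseudoinverse of a real matrix, characterized by the four
Penrose equations (which have a unique solution over ℝ). -/
noncomputable def mpinv {m n : Type*} [Fintype m] [Fintype n] (A : Matrix m n ℝ) :
    Matrix n m ℝ := by
  classical
  exact if h : ∃ B : Matrix n m ℝ,
      A * B * A = A ∧ B * A * B = B ∧ (A * B)ᵀ = A * B ∧ (B * A)ᵀ = B * A
    then h.choose else 0

/-- The matrix of cross second moments `E[Y Xᵀ]`. -/
noncomputable def crossMoment {Ω : Type*} [MeasurableSpace Ω] (μ : Measure Ω)
    {α β : Type*} (Y : Ω → α → ℝ) (X : Ω → β → ℝ) : Matrix α β ℝ :=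
  Matrix.of fun i j => ∫ ω, Y ω i * X ω j ∂μ

/-!
Write the positive semidefinite matrix `Σ` as a Gram matrix `Bᵀ B` with columns `b_j`. Then
`Σ_{•V} Σ_V⁺ Σ_{V•} = Bᵀ P_V B`, where `P_V` is the orthogonal projection onto the span of the
`b_j`, `j ∈ V`. Adjoining `i` to `U` adds the residual `r = b_i - P_U b_i` to an orthogonal basis of
that span, so `P_{U ∪ {i}} = P_U + r rᵀ / ‖r‖²` (Gram–Schmidt), while `β = Bᵀ r` and
`β_i = ‖r‖² ≥ 0`. If `β_i = 0` then `r = 0` and the projection does not change.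
-/

namespace Matrix

variable {k l m n : Type*}

theorem range_mulVecLin_submatrix_val (B : Matrix k n ℝ) (V : Finset n) :
    LinearMap.range (B.submatrix id fun j : ↥V => (j : n)).mulVecLin =
      Submodule.span ℝ (B.col '' ↑V) := by
  rw [range_mulVecLin, Set.image_eq_range]
  rfl

theorem range_mulVecLin_submatrix_val_insert [DecidableEq n] (B : Matrix k n ℝ) (i : n)
    (U : Finset n) :
    LinearMap.range (B.submatrix id fun j : ↥(insert i U) => (j : n)).mulVecLin =
      (ℝ ∙ B.col i) ⊔ LinearMap.range (B.submatrix id fun j : ↥U => (j : n)).mulVecLin := by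
  rw [range_mulVecLin_submatrix_val, range_mulVecLin_submatrix_val, Finset.coe_insert,
    Set.image_insert_eq, Submodule.span_insert]

section Projection

variable [Fintype k]

structure IsOrthProj (P : Matrix k k ℝ) (W : Submodule ℝ (k → ℝ)) : Prop where
  transpose_eq : Pᵀ = P
  mulVec_mem : ∀ x, P *ᵥ x ∈ W
  mulVec_eq_self : ∀ w ∈ W, P *ᵥ w = w

namespace IsOrthProj

variable {P Q : Matrix k k ℝ} {W : Submodule ℝ (k → ℝ)}

theorem dotProduct_sub_mulVec_eq_zero (hP : IsOrthProj P W) {w : k → ℝ} (hw : w ∈ W)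
    (x : k → ℝ) : w ⬝ᵥ (x - P *ᵥ x) = 0 := by
  rw [dotProduct_sub, dotProduct_mulVec, ← hP.transpose_eq, vecMul_transpose,
    hP.mulVec_eq_self w hw, sub_self]

theorem unique (hP : IsOrthProj P W) (hQ : IsOrthProj Q W) : P = Q := by
  refine ext_iff_mulVec.mpr fun x => ?_
  have hmem : P *ᵥ x - Q *ᵥ x ∈ W := W.sub_mem (hP.mulVec_mem x) (hQ.mulVec_mem x)
  have hself : (P *ᵥ x - Q *ᵥ x) ⬝ᵥ (P *ᵥ x - Q *ᵥ x) = 0 := calc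
    _ = (P *ᵥ x - Q *ᵥ x) ⬝ᵥ (x - Q *ᵥ x) - (P *ᵥ x - Q *ᵥ x) ⬝ᵥ (x - P *ᵥ x) := by
      rw [← dotProduct_sub, sub_sub_sub_cancel_left]
    _ = 0 := by
      rw [hQ.dotProduct_sub_mulVec_eq_zero hmem, hP.dotProduct_sub_mulVec_eq_zero hmem, sub_zero]
  exact sub_eq_zero.mp (dotProduct_self_eq_zero.mp hself)

theorem add_smul_vecMulVec (hP : IsOrthProj P W) (a : k → ℝ) {r : k → ℝ} (hr : r = a - P *ᵥ a) :
    IsOrthProj (P + (r ⬝ᵥ r)⁻¹ • vecMulVec r r) ((ℝ ∙ a) ⊔ W) := by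
  have hQ (v : k → ℝ) :
      (P + (r ⬝ᵥ r)⁻¹ • vecMulVec r r) *ᵥ v = P *ᵥ v + ((r ⬝ᵥ r)⁻¹ * (r ⬝ᵥ v)) • r := by
    rw [add_mulVec, smul_mulVec, vecMulVec_mulVec, op_smul_eq_smul, smul_smul]
  have hr_mem : r ∈ (ℝ ∙ a) ⊔ W := hr ▸ sub_mem
    (Submodule.mem_sup_left (Submodule.mem_span_singleton_self a))
    (Submodule.mem_sup_right (hP.mulVec_mem a))
  have hr_orth {w : k → ℝ} (hw : w ∈ W) : r ⬝ᵥ w = 0 := by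
    rw [dotProduct_comm, hr, hP.dotProduct_sub_mulVec_eq_zero hw]
  refine ⟨by simp [hP.transpose_eq], fun x => ?_, ?_⟩
  · rw [hQ]
    exact add_mem (Submodule.mem_sup_right (hP.mulVec_mem x)) (Submodule.smul_mem _ _ hr_mem)
  · have hfix_a : (P + (r ⬝ᵥ r)⁻¹ • vecMulVec r r) *ᵥ a = a := by
      have hra : r ⬝ᵥ a = r ⬝ᵥ r := by
        rw [← sub_eq_zero, ← dotProduct_sub, show a - r = P *ᵥ a by rw [hr, sub_sub_cancel],
          hr_orth (hP.mulVec_mem a)]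
      rw [hQ, hra]
      rcases eq_or_ne r 0 with h0 | h0
      · rw [h0, smul_zero, add_zero]
        exact (sub_eq_zero.mp (hr.symm.trans h0)).symm
      · rw [inv_mul_cancel₀ (dotProduct_self_eq_zero.not.mpr h0), one_smul, hr, add_sub_cancel]
    have hle : (ℝ ∙ a) ⊔ W ≤
        LinearMap.eqLocus (P + (r ⬝ᵥ r)⁻¹ • vecMulVec r r).mulVecLin LinearMap.id :=
      sup_le ((Submodule.span_singleton_le_iff_mem _ _).mpr hfix_a) fun w hw => by
        change _ *ᵥ w = w
        rw [hQ, hr_orth hw, mul_zero, zero_smul, add_zero, hP.mulVec_eq_self w hw]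
    exact fun w hw => hle hw

theorem gram_residual_sup_span_singleton {B : Matrix k n ℝ} (hP : IsOrthProj P W) {i : n}
    (hQ : IsOrthProj Q ((ℝ ∙ B.col i) ⊔ W)) {β : n → ℝ}
    (hβ : β = fun j => (Bᵀ * B - Bᵀ * P * B) j i) :
    Bᵀ * B - Bᵀ * Q * B =
      Bᵀ * B - Bᵀ * P * B - of fun j l => if 0 < β i then β j * β l / β i else 0 := by
  set a := B.col i
  set r := a - P *ᵥ a with hr
  have hQP : Q = P + (r ⬝ᵥ r)⁻¹ • vecMulVec r r := hQ.unique (hP.add_smul_vecMulVec a hr)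
  have hβr : β = Bᵀ *ᵥ r := by
    rw [hβ, ← Matrix.sub_mul, hr, mulVec_sub, mulVec_mulVec, ← sub_mulVec]
    rfl
  have hβi : β i = r ⬝ᵥ r := calc
    β i = a ⬝ᵥ r := by rw [hβr]; rfl
    _ = r ⬝ᵥ r + P *ᵥ a ⬝ᵥ r := by rw [← add_dotProduct, hr, sub_add_cancel]
    _ = r ⬝ᵥ r := by rw [hP.dotProduct_sub_mulVec_eq_zero (hP.mulVec_mem a) a, add_zero]
  have hcorr : (of fun j l => if 0 < β i then β j * β l / β i else 0) =
      (β i)⁻¹ • vecMulVec β β := by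
    ext j l
    split_ifs with hpos
    · simp [vecMulVec_apply, div_eq_inv_mul]
    · have hzero : β i = 0 := le_antisymm (not_lt.mp hpos) (hβi ▸ dotProduct_self_star_nonneg r)
      simp [hzero]
  rw [hcorr, hQP, Matrix.mul_add, Matrix.add_mul, Matrix.mul_smul, Matrix.smul_mul,
    mul_vecMulVec, vecMulVec_mul, ← mulVec_transpose, ← hβr, hβi, sub_sub]

end IsOrthProj

end Projection

variable [Fintype k] [Fintype n]

theorem IsHermitian.exists_penrose [DecidableEq n] {G : Matrix n n ℝ} (hG : G.IsHermitian) :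
    ∃ M : Matrix n n ℝ,
      G * M * G = G ∧ M * G * M = M ∧ (G * M)ᵀ = G * M ∧ (M * G)ᵀ = M * G := by
  have hG' : IsSelfAdjoint G := isHermitian_iff_isSelfAdjoint.mp hG
  have hmul (f g : ℝ → ℝ) : cfc f G * cfc g G = cfc (fun x => f x * g x) G :=
    (cfc_mul f g G (finite_real_spectrum.continuousOn f)
      (finite_real_spectrum.continuousOn g)).symm
  have hsymm (f : ℝ → ℝ) : (cfc f G)ᵀ = cfc f G := by
    rw [← conjTranspose_eq_transpose_of_trivial]; exact (cfc_predicate f G).star_eq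
  rw [← cfc_id' ℝ G]
  -- `G⁺ = f(G)` for `f x = x⁻¹`, thanks to the convention `0⁻¹ = 0`.
  refine ⟨cfc (fun x : ℝ => x⁻¹) G, ?_, ?_, ?_, ?_⟩ <;> simp only [hmul, hsymm]
  · congr! 2 with x; exact mul_inv_mul_cancel x
  · congr! 2 with x; simpa using mul_inv_mul_cancel x⁻¹

theorem IsHermitian.mul_mpinv_mul_self [DecidableEq n] {G : Matrix n n ℝ} (hG : G.IsHermitian) :
    G * mpinv G * G = G := by
  rw [mpinv, dif_pos hG.exists_penrose]
  exact hG.exists_penrose.choose_spec.1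

theorem mul_eq_mul_of_transpose_mul_self_mul_eq {A : Matrix k n ℝ} {X Y : Matrix n l ℝ}
    (h : Aᵀ * A * X = Aᵀ * A * Y) : A * X = A * Y := by
  have hzero : (A * (X - Y))ᴴ * (A * (X - Y)) = 0 := by
    rw [conjTranspose_eq_transpose_of_trivial, transpose_mul, Matrix.mul_assoc,
      ← Matrix.mul_assoc Aᵀ, Matrix.mul_sub, h, sub_self, Matrix.mul_zero]
  rw [← sub_eq_zero, ← Matrix.mul_sub]
  exact conjTranspose_mul_self_eq_zero.mp hzero

theorem isOrthProj_mul_mpinv_mul [DecidableEq n] (B : Matrix k n ℝ) :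
    IsOrthProj (B * mpinv (Bᵀ * B) * Bᵀ) (LinearMap.range B.mulVecLin) := by
  set M := mpinv (Bᵀ * B)
  have hGMG : Bᵀ * B * M * (Bᵀ * B) = Bᵀ * B :=
    (by simpa using isHermitian_conjTranspose_mul_self B : (Bᵀ * B).IsHermitian).mul_mpinv_mul_self
  have hPB : B * M * Bᵀ * B = B := by
    simpa [Matrix.mul_assoc] using
      mul_eq_mul_of_transpose_mul_self_mul_eq (X := M * (Bᵀ * B)) (Y := 1) (by
        simpa [Matrix.mul_assoc] using hGMG)
  have hPtB : (B * M * Bᵀ)ᵀ * B = B := by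
    have hGMtG : Bᵀ * B * Mᵀ * (Bᵀ * B) = Bᵀ * B := by
      simpa [Matrix.mul_assoc] using congrArg transpose hGMG
    simpa [Matrix.mul_assoc] using
      mul_eq_mul_of_transpose_mul_self_mul_eq (X := Mᵀ * (Bᵀ * B)) (Y := 1) (by
        simpa [Matrix.mul_assoc] using hGMtG)
  -- `P = Pᵀ P` is symmetric although `M` is not known to be.
  have hPtP : (B * M * Bᵀ)ᵀ * (B * M * Bᵀ) = B * M * Bᵀ := by
    rw [← Matrix.mul_assoc, ← Matrix.mul_assoc, hPtB]
  refine ⟨?_, fun x => ⟨M *ᵥ Bᵀ *ᵥ x, by simp [mulVec_mulVec, Matrix.mul_assoc]⟩, ?_⟩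
  · rw [← hPtP, transpose_mul, transpose_transpose]
  · rintro _ ⟨y, rfl⟩
    simp [mulVec_mulVec, hPB]

theorem submatrix_transpose_mul_self_mul_mpinv_mul (B : Matrix k m ℝ) (c : n → m) :
    (Bᵀ * B).submatrix id c * mpinv ((Bᵀ * B).submatrix c c) * (Bᵀ * B).submatrix c id =
      Bᵀ * (B.submatrix id c * mpinv ((B.submatrix id c)ᵀ * B.submatrix id c) *
        (B.submatrix id c)ᵀ) * B := by
  simp only [submatrix_mul _ _ _ id _ Function.bijective_id, transpose_submatrix,
    submatrix_id_id, Matrix.mul_assoc]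

open scoped MatrixOrder in
theorem PosSemidef.exists_eq_transpose_mul_self [DecidableEq n] {S : Matrix n n ℝ}
    (hS : S.PosSemidef) : ∃ B : Matrix n n ℝ, S = Bᵀ * B := by
  obtain ⟨B, hB⟩ := CStarAlgebra.nonneg_iff_eq_star_mul_self.mp hS.nonneg
  exact ⟨B, by rwa [star_eq_conjTranspose, conjTranspose_eq_transpose_of_trivial] at hB⟩

end Matrix

theorem posSemidef_crossMoment_self {Ω ι : Type*} [MeasurableSpace Ω] {μ : Measure Ω} [Fintype ι]
    {X : Ω → ι → ℝ} (hX : ∀ i, MemLp (fun ω => X ω i) 2 μ) :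
    (crossMoment μ X X).PosSemidef := by
  have hint (x : ι → ℝ) (j l : ι) : Integrable (fun ω => x j * X ω j * (x l * X ω l)) μ := by
    simpa [mul_mul_mul_comm] using ((hX j).integrable_mul (hX l)).const_mul (x j * x l)
  refine .of_dotProduct_mulVec_nonneg ?_ fun x => ?_
  · ext j l
    simp [crossMoment, mul_comm]
  calc 0 ≤ ∫ ω, (∑ j, x j * X ω j) ^ 2 ∂μ := integral_nonneg fun _ => sq_nonneg _
    _ = ∑ j, ∑ l, ∫ ω, x j * X ω j * (x l * X ω l) ∂μ := by
      simp_rw [sq, Finset.sum_mul_sum]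
      rw [integral_finsetSum _ fun j _ => integrable_finsetSum _ fun l _ => hint x j l]
      simp_rw [integral_finsetSum _ fun l _ => hint x _ l]
    _ = star x ⬝ᵥ crossMoment μ X X *ᵥ x := by
      simp only [dotProduct, mulVec, crossMoment, of_apply, Finset.mul_sum, star_trivial]
      refine Finset.sum_congr rfl fun j _ => Finset.sum_congr rfl fun l _ => ?_
      rw [← integral_mul_const, ← integral_const_mul]
      congr 1; ext ω; ring

theorem residual_cov_update_general {Ω : Type*} [MeasurableSpace Ω] (μ : Measure Ω)
    {p : ℕ}
    (X : Ω → Fin p → ℝ) (hX : ∀ i, MemLp (fun ω => X ω i) 2 μ)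
    (Sig : Matrix (Fin p) (Fin p) ℝ) (hSig : Sig = crossMoment μ X X)
    (U : Finset (Fin p)) (i : Fin p)
    (resid : Finset (Fin p) → Matrix (Fin p) (Fin p) ℝ)
    (hresid : ∀ V : Finset (Fin p),
      resid V = Sig - Sig.submatrix id (fun j : ↥V => (j : Fin p)) *
        mpinv (Sig.submatrix (fun j : ↥V => (j : Fin p)) (fun j : ↥V => (j : Fin p))) *
        Sig.submatrix (fun j : ↥V => (j : Fin p)) id)
    (β : Fin p → ℝ) (hβ : β = fun j => resid U j i) :
    resid (insert i U) =
      resid U - Matrix.of fun j l => if 0 < β i then β j * β l / β i else 0 := by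
  obtain ⟨B, hB⟩ := (posSemidef_crossMoment_self hX).exists_eq_transpose_mul_self
  subst hSig
  have hresid_gram (V : Finset (Fin p)) : resid V = Bᵀ * B -
      Bᵀ * (B.submatrix id (fun j : ↥V => (j : Fin p)) *
        mpinv ((B.submatrix id fun j : ↥V => (j : Fin p))ᵀ *
          B.submatrix id fun j : ↥V => (j : Fin p)) *
        (B.submatrix id fun j : ↥V => (j : Fin p))ᵀ) * B := by
    rw [hresid, hB, submatrix_transpose_mul_self_mul_mpinv_mul]
  rw [hresid_gram U] at hβ
  rw [hresid_gram, hresid_gram]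
  exact (isOrthProj_mul_mpinv_mul _).gram_residual_sup_span_singleton
    (range_mulVecLin_submatrix_val_insert B i U ▸ isOrthProj_mul_mpinv_mul _) hβ

/-- **Efficient residual covariance update** (Lemma 1). For a mean-zero
square-integrable random vector `X` with covariance `Σ`, a subset `U`, and
`i ∉ U`, with `Σ_{R(U)} = Σ − Σ_{•U} Σ_U⁺ Σ_{U•}` and `β = (Σ_{R(U)})_{•i}`,
we have `Σ_{R(U∪{i})} = Σ_{R(U)} − (ββᵀ/β_i)·1{β_i > 0}`. -/
theorem residual_cov_update {Ω : Type*} [MeasurableSpace Ω] (μ : Measure Ω)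
    [IsProbabilityMeasure μ] {p : ℕ}
    (X : Ω → Fin p → ℝ) (hX : ∀ i, MemLp (fun ω => X ω i) 2 μ)
    (hmean : ∀ i, ∫ ω, X ω i ∂μ = 0)
    (Sig : Matrix (Fin p) (Fin p) ℝ) (hSig : Sig = crossMoment μ X X)
    (U : Finset (Fin p)) (i : Fin p) (hi : i ∉ U)
    (resid : Finset (Fin p) → Matrix (Fin p) (Fin p) ℝ)
    (hresid : ∀ V : Finset (Fin p),
      resid V = Sig - Sig.submatrix id (fun j : ↥V => (j : Fin p)) *
        mpinv (Sig.submatrix (fun j : ↥V => (j : Fin p)) (fun j : ↥V => (j : Fin p))) *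
        Sig.submatrix (fun j : ↥V => (j : Fin p)) id)
    (β : Fin p → ℝ) (hβ : β = fun j => resid U j i) :
    resid (insert i U) =
      resid U - Matrix.of fun j l => if 0 < β i then β j * β l / β i else 0 :=
  residual_cov_update_general μ X hX Sig hSig U i resid hresid β hβ
end

section
/- Let X ∈ R^p be a square-integrable random vector following a k-dimensional factor model: X = μ + WZ + ε, where Z ∈ R^k has mean zero and covariance I_k, ε has mean zero and diagonal (possibly singular) covariance D with Cov(Z, ε) = 0, and Cov(X) = Σ ≻ 0. If the common factors are components, i.e., Z = B(X − μ) for some B ∈ R^{k×p}, then there exist a size-k subset S ⊆ [p], a matrix W̃ ∈ R^{(p−k)×k}, and a random vector ε̃ with positive-definite diagonal covariance and Cov(X_S, ε̃) = 0 such that X_{−S} = μ_{−S} + W̃(X_S − μ_S) + ε̃. Conversely, any such subset representation yields a factor model whose common factors are components. -/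
/-!
Write `Y = X - m`. If `Y = W Z + ε` with `Z = B Y`, `Cov Z = I`, `Cov(Z, ε) = 0` and
`D = Cov ε` diagonal, then second moments give `Cov(Y, Z) = W`, hence `B W = Cov Z = I`,
`D Bᵀ = Cov(ε, Z) = 0` and `Σ = W Wᵀ + D`. So `B` vanishes off `S = {i | Dᵢᵢ = 0}`:
`B_S W_S = I` forces `k ≤ |S|`, while `Σ_SS = W_S W_Sᵀ ≻ 0` forces `|S| ≤ k`. Then
`Z = B_S Y_S`, and the rows of `Y = W Z + ε` off `S` read `Y_{-S} = W_{-S} B_S Y_S + ε_{-S}`.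

Conversely, whiten `Y_S`: with `A Σ_SS Aᵀ = I` and `L A = I`, the components `Z = A Y_S` are
common factors, with loadings `L` on `S` and `W̃ L` off `S` and unique factors `0` on `S`.
-/

open MeasureTheory Matrix

section CrossMoment

variable {Ω : Type*} [MeasurableSpace Ω] {μ : Measure Ω} {ι κ ν : Type*}

theorem integrable_mul_of_memLp_two {f g : Ω → ℝ} (hf : MemLp f 2 μ) (hg : MemLp g 2 μ) :
    Integrable (fun ω => f ω * g ω) μ :=
  hf.integrable_mul hg

theorem memLp_mulVec_apply [Fintype ι] {Y : Ω → ι → ℝ} (hY : ∀ i, MemLp (fun ω => Y ω i) 2 μ)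
    (A : Matrix κ ι ℝ) (l : κ) : MemLp (fun ω => (A *ᵥ Y ω) l) 2 μ :=
  memLp_finsetSum _ fun i _ => (hY i).const_mul (A l i)

theorem integral_mulVec_apply [Fintype ι] {Y : Ω → ι → ℝ}
    (hY : ∀ i, Integrable (fun ω => Y ω i) μ) (A : Matrix κ ι ℝ) (l : κ) :
    ∫ ω, (A *ᵥ Y ω) l ∂μ = (A *ᵥ fun i => ∫ ω, Y ω i ∂μ) l := by
  simp only [mulVec, dotProduct]
  rw [integral_finsetSum _ fun i _ => (hY i).const_mul (A l i)]
  simp_rw [integral_const_mul]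

theorem crossMoment_transpose (Y : Ω → ι → ℝ) (X : Ω → κ → ℝ) :
    (crossMoment μ Y X)ᵀ = crossMoment μ X Y := by
  ext i j
  simp only [crossMoment, transpose_apply, of_apply, mul_comm]

theorem crossMoment_congr_ae {Y Y' : Ω → ι → ℝ} {X X' : Ω → κ → ℝ} (hY : Y =ᵐ[μ] Y')
    (hX : X =ᵐ[μ] X') : crossMoment μ Y X = crossMoment μ Y' X' := by
  ext i j
  refine integral_congr_ae ?_
  filter_upwards [hY, hX] with ω hYω hXω
  rw [hYω, hXω]

theorem crossMoment_add_left {Y Y' : Ω → ι → ℝ} {X : Ω → κ → ℝ}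
    (hY : ∀ i, MemLp (fun ω => Y ω i) 2 μ) (hY' : ∀ i, MemLp (fun ω => Y' ω i) 2 μ)
    (hX : ∀ j, MemLp (fun ω => X ω j) 2 μ) :
    crossMoment μ (fun ω => Y ω + Y' ω) X = crossMoment μ Y X + crossMoment μ Y' X := by
  ext i j
  simp only [crossMoment, of_apply, Matrix.add_apply, Pi.add_apply, add_mul]
  exact integral_add (integrable_mul_of_memLp_two (hY i) (hX j))
    (integrable_mul_of_memLp_two (hY' i) (hX j))

theorem crossMoment_mulVec_left [Fintype ι] {Y : Ω → ι → ℝ} {X : Ω → κ → ℝ}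
    (A : Matrix ν ι ℝ) (hY : ∀ i, MemLp (fun ω => Y ω i) 2 μ)
    (hX : ∀ j, MemLp (fun ω => X ω j) 2 μ) :
    crossMoment μ (fun ω => A *ᵥ Y ω) X = A * crossMoment μ Y X := by
  ext l j
  simp only [crossMoment, of_apply, mul_apply, mulVec, dotProduct, Finset.sum_mul, mul_assoc]
  rw [integral_finsetSum _ fun i _ => (integrable_mul_of_memLp_two (hY i) (hX j)).const_mul _]
  simp_rw [integral_const_mul]

theorem crossMoment_mulVec_right [Fintype κ] {Y : Ω → ι → ℝ} {X : Ω → κ → ℝ}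
    (A : Matrix ν κ ℝ) (hY : ∀ i, MemLp (fun ω => Y ω i) 2 μ)
    (hX : ∀ j, MemLp (fun ω => X ω j) 2 μ) :
    crossMoment μ Y (fun ω => A *ᵥ X ω) = crossMoment μ Y X * Aᵀ := by
  rw [← crossMoment_transpose, crossMoment_mulVec_left A hX hY, transpose_mul,
    crossMoment_transpose]

theorem crossMoment_self_eq_diagonal [DecidableEq ι] {ε : Ω → ι → ℝ}
    (h : ∀ i i', i ≠ i' → ∫ ω, ε ω i * ε ω i' ∂μ = 0) :
    crossMoment μ ε ε = diagonal fun i => ∫ ω, ε ω i * ε ω i ∂μ := by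
  ext i i'
  by_cases hii' : i = i'
  · subst hii'
    rw [diagonal_apply_eq]
    rfl
  · rw [diagonal_apply_ne _ hii']
    exact h i i' hii'

structure IsLinearFactorModel [Fintype κ] [DecidableEq κ] (μ : Measure Ω) (Y : Ω → ι → ℝ)
    (W : Matrix ι κ ℝ) (Z : Ω → κ → ℝ) (ε : Ω → ι → ℝ) : Prop where
  memLp_factor : ∀ j, MemLp (fun ω => Z ω j) 2 μ
  memLp_noise : ∀ i, MemLp (fun ω => ε ω i) 2 μ
  ae_eq : Y =ᵐ[μ] fun ω => W *ᵥ Z ω + ε ω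
  crossMoment_factor_factor : crossMoment μ Z Z = 1
  crossMoment_factor_noise : crossMoment μ Z ε = 0

namespace IsLinearFactorModel

variable [Fintype κ] [DecidableEq κ] {Y ε : Ω → ι → ℝ} {W : Matrix ι κ ℝ} {Z : Ω → κ → ℝ}

theorem crossMoment_observed_left (h : IsLinearFactorModel μ Y W Z ε) {V : Ω → ν → ℝ}
    (hV : ∀ j, MemLp (fun ω => V ω j) 2 μ) :
    crossMoment μ Y V = W * crossMoment μ Z V + crossMoment μ ε V := by
  rw [crossMoment_congr_ae h.ae_eq (ae_eq_refl V),
    crossMoment_add_left (memLp_mulVec_apply h.memLp_factor W) h.memLp_noise hV,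
    crossMoment_mulVec_left W h.memLp_factor hV]

theorem crossMoment_observed_factor (h : IsLinearFactorModel μ Y W Z ε) :
    crossMoment μ Y Z = W := by
  rw [h.crossMoment_observed_left h.memLp_factor, h.crossMoment_factor_factor,
    ← crossMoment_transpose, h.crossMoment_factor_noise, transpose_zero, Matrix.mul_one, add_zero]

theorem crossMoment_noise_observed (h : IsLinearFactorModel μ Y W Z ε) :
    crossMoment μ ε Y = crossMoment μ ε ε := by
  rw [← crossMoment_transpose, h.crossMoment_observed_left h.memLp_noise,
    h.crossMoment_factor_noise, Matrix.mul_zero, zero_add, crossMoment_transpose]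

theorem crossMoment_observed_observed (h : IsLinearFactorModel μ Y W Z ε)
    (hY : ∀ i, MemLp (fun ω => Y ω i) 2 μ) :
    crossMoment μ Y Y = W * Wᵀ + crossMoment μ ε ε := by
  rw [h.crossMoment_observed_left hY, ← crossMoment_transpose Y Z, h.crossMoment_observed_factor,
    h.crossMoment_noise_observed]

variable {B : Matrix κ ι ℝ}

theorem mul_loadings_eq_one [Fintype ι] (h : IsLinearFactorModel μ Y W Z ε)
    (hY : ∀ i, MemLp (fun ω => Y ω i) 2 μ) (hZ : Z =ᵐ[μ] fun ω => B *ᵥ Y ω) : B * W = 1 := by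
  rw [← h.crossMoment_factor_factor, crossMoment_congr_ae hZ (ae_eq_refl Z),
    crossMoment_mulVec_left B hY h.memLp_factor, h.crossMoment_observed_factor]

theorem crossMoment_noise_mul_transpose_eq_zero [Fintype ι] (h : IsLinearFactorModel μ Y W Z ε)
    (hY : ∀ i, MemLp (fun ω => Y ω i) 2 μ) (hZ : Z =ᵐ[μ] fun ω => B *ᵥ Y ω) :
    crossMoment μ ε ε * Bᵀ = 0 := by
  rw [← h.crossMoment_noise_observed, ← crossMoment_mulVec_right B h.memLp_noise hY,
    ← crossMoment_congr_ae (ae_eq_refl ε) hZ, ← crossMoment_transpose,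
    h.crossMoment_factor_noise, transpose_zero]

end IsLinearFactorModel

end CrossMoment

section LinearAlgebra

variable {ι κ ν R : Type*} [Fintype ι]

theorem Matrix.card_le_card_of_mul_eq_one [Fintype κ] [DecidableEq κ] [CommRing R]
    [StrongRankCondition R] {B : Matrix κ ι R} {W : Matrix ι κ R} (h : B * W = 1) :
    Fintype.card κ ≤ Fintype.card ι :=
  calc Fintype.card κ = (B * W).rank := by rw [h, rank_one]
    _ ≤ B.rank := rank_mul_le_left B W
    _ ≤ Fintype.card ι := rank_le_card_width B

theorem Matrix.card_le_card_of_posDef_mul_transpose [Fintype κ] [DecidableEq ι] {W : Matrix ι κ ℝ}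
    (h : (W * Wᵀ).PosDef) : Fintype.card ι ≤ Fintype.card κ :=
  calc Fintype.card ι = (W * Wᵀ).rank := (rank_of_isUnit _ h.isUnit).symm
    _ ≤ W.rank := rank_mul_le_left W Wᵀ
    _ ≤ Fintype.card κ := rank_le_card_width W

theorem Matrix.mulVec_eq_submatrix_mulVec [CommSemiring R] {S : Finset ι} {B : Matrix κ ι R}
    (hB : ∀ l, ∀ i ∉ S, B l i = 0) (v : ι → R) :
    B *ᵥ v = B.submatrix id Subtype.val *ᵥ fun s : S => v s := by
  ext l
  simp only [mulVec, dotProduct, submatrix_apply, id]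
  rw [Finset.sum_coe_sort S fun i => B l i * v i]
  exact (Finset.sum_subset (Finset.subset_univ S) fun i _ hi => by rw [hB l i hi, zero_mul]).symm

theorem Matrix.mul_eq_submatrix_mul [CommSemiring R] {S : Finset ι} {B : Matrix κ ι R}
    (hB : ∀ l, ∀ i ∉ S, B l i = 0) (W : Matrix ι ν R) :
    B * W = B.submatrix id (Subtype.val : S → ι) * W.submatrix Subtype.val id := by
  ext l j
  exact congrFun (mulVec_eq_submatrix_mulVec hB fun i => W i j) l

theorem Matrix.apply_eq_zero_of_diagonal_mul_transpose_eq_zero [DecidableEq ι] [Semiring R]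
    [NoZeroDivisors R] {d : ι → R} {B : Matrix κ ι R} (h : diagonal d * Bᵀ = 0) {i : ι}
    (hi : d i ≠ 0) (l : κ) : B l i = 0 := by
  have := congrFun (congrFun h i) l
  rw [diagonal_mul] at this
  exact (mul_eq_zero.1 this).resolve_left hi

theorem Matrix.PosDef.card_filter_eq_zero_eq_card [Fintype κ] [DecidableEq ι] [DecidableEq κ]
    {Sig : Matrix ι ι ℝ} (hSig : Sig.PosDef) {W : Matrix ι κ ℝ} {B : Matrix κ ι ℝ} {d : ι → ℝ}
    (hSigW : Sig = W * Wᵀ + diagonal d) (hBW : B * W = 1)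
    (hdB : diagonal d * Bᵀ = 0) :
    (Finset.univ.filter fun i => d i = 0).card = Fintype.card κ := by
  set S := Finset.univ.filter fun i => d i = 0
  have hBS : ∀ l, ∀ i ∉ S, B l i = 0 := fun l i hi =>
    apply_eq_zero_of_diagonal_mul_transpose_eq_zero hdB (by simpa [S] using hi) l
  have hSigS : Sig.submatrix Subtype.val Subtype.val
      = W.submatrix (Subtype.val : S → ι) id * (W.submatrix (Subtype.val : S → ι) id)ᵀ := by
    have hdS : d ∘ (Subtype.val : S → ι) = fun _ => 0 := funext fun s => (Finset.mem_filter.1 s.2).2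
    calc Sig.submatrix Subtype.val Subtype.val
        = (W * Wᵀ).submatrix (Subtype.val : S → ι) Subtype.val
          + (diagonal d).submatrix Subtype.val Subtype.val := by rw [hSigW]; rfl
      _ = _ := by
        rw [submatrix_diagonal _ _ Subtype.val_injective, hdS, diagonal_zero, add_zero,
          submatrix_mul _ _ _ _ _ Function.bijective_id, transpose_submatrix]
  rw [← Fintype.card_coe]
  exact le_antisymm
    (card_le_card_of_posDef_mul_transpose (hSigS ▸ hSig.submatrix Subtype.val_injective))
    (card_le_card_of_mul_eq_one ((mul_eq_submatrix_mul hBS W).symm.trans hBW))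

open scoped MatrixOrder in
theorem Matrix.PosDef.exists_mul_eq_one_and_mul_mul_transpose_eq_one {n : Type*} [Fintype n]
    [DecidableEq n] [Fintype κ] [DecidableEq κ] {M : Matrix n n ℝ} (hM : M.PosDef) (e : n ≃ κ) :
    ∃ (A : Matrix κ n ℝ) (L : Matrix n κ ℝ), L * A = 1 ∧ A * M * Aᵀ = 1 := by
  obtain ⟨y, hy, rfl⟩ := CStarAlgebra.isStrictlyPositive_iff_eq_star_mul_self.mp
    hM.isStrictlyPositive
  have hdet : IsUnit y.det := (isUnit_iff_isUnit_det y).mp hy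
  have hwhite : (y⁻¹)ᵀ * (star y * y) * (y⁻¹)ᵀᵀ = 1 := by
    rw [star_eq_conjTranspose, conjTranspose_eq_transpose_of_trivial, transpose_transpose,
      Matrix.mul_assoc, Matrix.mul_assoc, mul_nonsing_inv _ hdet, Matrix.mul_one,
      ← transpose_mul, mul_nonsing_inv _ hdet, transpose_one]
  refine ⟨(y⁻¹)ᵀ.submatrix e.symm id, yᵀ.submatrix id e.symm, ?_, ?_⟩
  · rw [submatrix_mul_equiv, ← transpose_mul, nonsing_inv_mul _ hdet, transpose_one,
      submatrix_id_id]
  · rw [transpose_submatrix, ← submatrix_id_id (star y * y), ← submatrix_mul _ _ _ _ _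
      Function.bijective_id, ← submatrix_mul _ _ _ _ _ Function.bijective_id, hwhite,
      submatrix_one_equiv]

end LinearAlgebra

section SubsetFactorModel

variable {Ω ι : Type*} [MeasurableSpace Ω] [Fintype ι] [DecidableEq ι] {μ : Measure Ω}
  {S : Finset ι}

def extendByZero {R : Type*} [Zero R] (S : Finset ι) (v : S → R) : ι → R :=
  fun i => if h : i ∈ S then v ⟨i, h⟩ else 0

def subsetLoadings (S : Finset ι) (Wt : Matrix ↥(Sᶜ) S ℝ) : Matrix ι S ℝ :=
  of fun i s => if h : i ∈ S then (1 : Matrix S S ℝ) ⟨i, h⟩ s else Wt ⟨i, Finset.mem_compl.2 h⟩ s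

theorem extendByZero_mulVec {κ : Type*} (A : Matrix κ S ℝ) (v : ι → ℝ) :
    (of fun l => extendByZero S (A l)) *ᵥ v = A *ᵥ fun s : S => v s := by
  rw [mulVec_eq_submatrix_mulVec (S := S) fun l i hi => by simp [extendByZero, hi]]
  congr 1
  ext l s
  simp [extendByZero]

theorem subsetLoadings_mulVec_add_extendByZero {Wt : Matrix ↥(Sᶜ) S ℝ} {v : ι → ℝ}
    {e : ↥(Sᶜ) → ℝ} (hv : ∀ j : ↥(Sᶜ), v j = (Wt *ᵥ fun s : S => v s) j + e j) :
    subsetLoadings S Wt *ᵥ (fun s : S => v s) + extendByZero Sᶜ e = v := by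
  funext i
  by_cases h : i ∈ S
  · simp [subsetLoadings, extendByZero, h, mulVec, dotProduct, one_apply]
  · simp only [subsetLoadings, extendByZero, Pi.add_apply, mulVec, dotProduct, of_apply, h,
      Finset.mem_compl, dite_false, not_false_eq_true, dite_true]
    exact (hv ⟨i, Finset.mem_compl.2 h⟩).symm

variable {εt : Ω → ↥(Sᶜ) → ℝ}

theorem memLp_extendByZero (h : ∀ j, MemLp (fun ω => εt ω j) 2 μ) (i : ι) :
    MemLp (fun ω => extendByZero Sᶜ (εt ω) i) 2 μ := by
  by_cases hi : i ∈ S <;> simp only [extendByZero, Finset.mem_compl, hi, dite_true, dite_false,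
    not_true_eq_false, not_false_eq_true]
  exacts [MemLp.zero, h _]

theorem integral_extendByZero (h : ∀ j, ∫ ω, εt ω j ∂μ = 0) (i : ι) :
    ∫ ω, extendByZero Sᶜ (εt ω) i ∂μ = 0 := by
  by_cases hi : i ∈ S <;> simp [extendByZero, hi, h]

theorem integral_extendByZero_mul_of_ne (h : ∀ j l, j ≠ l → ∫ ω, εt ω j * εt ω l ∂μ = 0)
    {i i' : ι} (hii' : i ≠ i') :
    ∫ ω, extendByZero Sᶜ (εt ω) i * extendByZero Sᶜ (εt ω) i' ∂μ = 0 := by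
  by_cases hi : i ∈ S
  · simp [extendByZero, hi]
  by_cases hi' : i' ∈ S
  · simp [extendByZero, hi']
  simpa [extendByZero, hi, hi'] using h _ _ (by simpa using hii')

theorem crossMoment_extendByZero_eq_zero {κ : Type*} {V : Ω → κ → ℝ}
    (h : ∀ l j, ∫ ω, V ω l * εt ω j ∂μ = 0) :
    crossMoment μ V (fun ω => extendByZero Sᶜ (εt ω)) = 0 := by
  ext l i
  by_cases hi : i ∈ S
  · simp [crossMoment, extendByZero, hi]
  · simpa [crossMoment, extendByZero, hi] using h l ⟨i, Finset.mem_compl.2 hi⟩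

end SubsetFactorModel

section FactorModels

variable {Ω ι : Type*} [MeasurableSpace Ω] [Fintype ι]

def IsComponentFactorModel (μ : Measure Ω) (X : Ω → ι → ℝ) (m : ι → ℝ) (k : ℕ) : Prop :=
  ∃ (Z : Ω → Fin k → ℝ) (W : Matrix ι (Fin k) ℝ) (ε : Ω → ι → ℝ) (B : Matrix (Fin k) ι ℝ),
    (∀ j, MemLp (fun ω => Z ω j) 2 μ) ∧
    (∀ i, MemLp (fun ω => ε ω i) 2 μ) ∧
    (∀ j, ∫ ω, Z ω j ∂μ = 0) ∧
    (∀ j l, ∫ ω, Z ω j * Z ω l ∂μ = if j = l then (1 : ℝ) else 0) ∧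
    (∀ i, ∫ ω, ε ω i ∂μ = 0) ∧
    (∀ i i', i ≠ i' → ∫ ω, ε ω i * ε ω i' ∂μ = 0) ∧
    (∀ j i, ∫ ω, Z ω j * ε ω i ∂μ = 0) ∧
    (∀ᵐ ω ∂μ, ∀ i, X ω i = m i + W.mulVec (Z ω) i + ε ω i) ∧
    (∀ᵐ ω ∂μ, Z ω = B.mulVec fun i => X ω i - m i)

def IsSubsetFactorModel [DecidableEq ι] (μ : Measure Ω) (X : Ω → ι → ℝ) (m : ι → ℝ) (k : ℕ) :
    Prop :=
  ∃ S : Finset ι, S.card = k ∧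
    ∃ (Wt : Matrix ↥(Sᶜ) ↥S ℝ) (εt : Ω → ↥(Sᶜ) → ℝ),
      (∀ j, MemLp (fun ω => εt ω j) 2 μ) ∧
      (∀ j, ∫ ω, εt ω j ∂μ = 0) ∧
      (∀ᵐ ω ∂μ, ∀ j : ↥(Sᶜ),
        X ω (j : ι) = m (j : ι) +
          Wt.mulVec (fun s : ↥S => X ω (s : ι) - m (s : ι)) j + εt ω j) ∧
      (∀ (s : ↥S) (j : ↥(Sᶜ)),
        ∫ ω, (X ω (s : ι) - m (s : ι)) * εt ω j ∂μ = 0) ∧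
      (∀ j l : ↥(Sᶜ), j ≠ l → ∫ ω, εt ω j * εt ω l ∂μ = 0) ∧
      (∀ j : ↥(Sᶜ), 0 < ∫ ω, (εt ω j) ^ 2 ∂μ)

variable {μ : Measure Ω} {X : Ω → ι → ℝ} {m : ι → ℝ} {k : ℕ}

theorem IsComponentFactorModel.isSubsetFactorModel [DecidableEq ι] [IsFiniteMeasure μ]
    (hX : ∀ i, MemLp (fun ω => X ω i) 2 μ)
    (hpos : (crossMoment μ (fun ω => X ω - m) (fun ω => X ω - m)).PosDef)
    (h : IsComponentFactorModel μ X m k) : IsSubsetFactorModel μ X m k := by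
  obtain ⟨Z, W, ε, B, hZ, hε, -, hZZ, hε0, hεε, hZε, hXeq, hZB⟩ := h
  set Y : Ω → ι → ℝ := fun ω => X ω - m
  have hY : ∀ i, MemLp (fun ω => Y ω i) 2 μ := fun i => (hX i).sub (memLp_const (m i))
  have hmodel : IsLinearFactorModel μ Y W Z ε :=
    { memLp_factor := hZ
      memLp_noise := hε
      ae_eq := hXeq.mono fun ω hω => funext fun i => by
        show X ω i - m i = (W *ᵥ Z ω) i + ε ω i
        rw [hω i]
        ring
      crossMoment_factor_factor := by ext j l; exact hZZ j l
      crossMoment_factor_noise := by ext j i; exact hZε j i }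
  set d : ι → ℝ := fun i => ∫ ω, ε ω i * ε ω i ∂μ
  have hD : crossMoment μ ε ε = diagonal d := crossMoment_self_eq_diagonal hεε
  have hdB : diagonal d * Bᵀ = 0 := hD ▸ hmodel.crossMoment_noise_mul_transpose_eq_zero hY hZB
  have hcard := hpos.card_filter_eq_zero_eq_card
    (by rw [hmodel.crossMoment_observed_observed hY, hD]) (hmodel.mul_loadings_eq_one hY hZB) hdB
  set S := Finset.univ.filter fun i => d i = 0
  have hnotS : ∀ j : ↥(Sᶜ), d j ≠ 0 := fun j h => Finset.mem_compl.1 j.2 (by simpa [S] using h)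
  refine ⟨S, hcard.trans (Fintype.card_fin k),
    W.submatrix Subtype.val id * B.submatrix id Subtype.val, fun ω j => ε ω j,
    fun j => hε j, fun j => hε0 j, ?_, fun s j => ?_,
    fun j l hjl => hεε _ _ (Subtype.val_injective.ne hjl), fun j => ?_⟩
  · have hBS : ∀ l, ∀ i ∉ S, B l i = 0 := fun l i hi =>
      apply_eq_zero_of_diagonal_mul_transpose_eq_zero hdB (by simpa [S] using hi) l
    filter_upwards [hXeq, hZB] with ω hXω hZω j
    rw [hXω, hZω, mulVec_eq_submatrix_mulVec hBS, ← mulVec_mulVec]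
    rfl
  · have hsj : (j : ι) ≠ s := fun h => Finset.mem_compl.1 j.2 (h ▸ s.2)
    have := congrFun (congrFun hmodel.crossMoment_noise_observed j) s
    rw [hD, diagonal_apply_ne _ hsj] at this
    exact (integral_congr_ae (ae_of_all _ fun ω => mul_comm _ _)).trans this
  · simpa only [sq] using (integral_nonneg fun ω => mul_self_nonneg (ε ω j)).lt_of_ne' (hnotS j)

theorem IsSubsetFactorModel.isComponentFactorModel [DecidableEq ι] [IsProbabilityMeasure μ]
    (hX : ∀ i, MemLp (fun ω => X ω i) 2 μ) (hm : m = fun i => ∫ ω, X ω i ∂μ)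
    (hpos : (crossMoment μ (fun ω => X ω - m) (fun ω => X ω - m)).PosDef)
    (h : IsSubsetFactorModel μ X m k) : IsComponentFactorModel μ X m k := by
  obtain ⟨S, hS, Wt, εt, hεt, hεt0, hXeq, hXεt, hεtεt, -⟩ := h
  set Y : Ω → ι → ℝ := fun ω => X ω - m
  set YS : Ω → S → ℝ := fun ω s => Y ω s
  have hYS : ∀ s, MemLp (fun ω => YS ω s) 2 μ := fun s => (hX s).sub (memLp_const (m s))
  have hYS0 : ∀ s, ∫ ω, YS ω s ∂μ = 0 := fun s => by
    show ∫ ω, X ω s - m s ∂μ = 0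
    rw [integral_sub ((hX s).integrable one_le_two) (integrable_const _), hm]
    simp
  obtain ⟨A, L, hLA, hA⟩ := (hpos.submatrix Subtype.val_injective)
    |>.exists_mul_eq_one_and_mul_mul_transpose_eq_one (S.equivFin.trans (finCongr hS))
  set Z : Ω → Fin k → ℝ := fun ω => A *ᵥ YS ω
  set ε : Ω → ι → ℝ := fun ω => extendByZero Sᶜ (εt ω)
  have hε := memLp_extendByZero hεt
  have hZZ : crossMoment μ Z Z = 1 := by
    rw [crossMoment_mulVec_left A hYS (memLp_mulVec_apply hYS A),
      crossMoment_mulVec_right A hYS hYS, ← Matrix.mul_assoc]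
    exact hA
  have hZε : crossMoment μ Z ε = 0 := by
    rw [crossMoment_mulVec_left A hYS hε, crossMoment_extendByZero_eq_zero (V := YS) hXεt,
      Matrix.mul_zero]
  refine ⟨Z, subsetLoadings S Wt * L, ε, of fun l => extendByZero S (A l),
    memLp_mulVec_apply hYS A, hε, fun j => ?_, fun j l => congrFun (congrFun hZZ j) l,
    integral_extendByZero hεt0, fun i i' => integral_extendByZero_mul_of_ne hεtεt,
    fun j i => congrFun (congrFun hZε j) i, ?_, ae_of_all _ fun ω => (extendByZero_mulVec A _).symm⟩
  · rw [integral_mulVec_apply (fun s => (hYS s).integrable one_le_two),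
      show (fun s => ∫ ω, YS ω s ∂μ) = 0 from funext hYS0, mulVec_zero]
    rfl
  · filter_upwards [hXeq] with ω hω i
    have hi := congrFun (subsetLoadings_mulVec_add_extendByZero (Wt := Wt) (v := Y ω)
      (e := εt ω) fun j => by simp only [Y, Pi.sub_apply]; linarith [hω j]) i
    rw [mulVec_mulVec, Matrix.mul_assoc, hLA, Matrix.mul_one]
    simp only [Pi.add_apply, Y, Pi.sub_apply] at hi
    show X ω i = m i + (subsetLoadings S Wt *ᵥ fun s : S => X ω s - m s) i
      + extendByZero Sᶜ (εt ω) i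
    linarith

end FactorModels

/-- **The subset factor model compromise** (Theorem 2). Suppose
`X ∼ (m, Σ)` with `Σ ≻ 0`. Then `X` follows a `k`-dimensional factor model
(allowing zero-variance unique factors) whose common factors are components,
i.e. `Z = B(X − m)`, if and only if `X` follows a `k`-dimensional subset
factor model: for some size-`k` subset `S`,
`X_{−S} = m_{−S} + W̃(X_S − m_S) + ε̃` with `Cov(X_S, ε̃) = 0` and `Cov(ε̃)`
diagonal and positive definite. -/
theorem subset_factor_compromise {Ω : Type*} [MeasurableSpace Ω] (μ : Measure Ω)
    [IsProbabilityMeasure μ] {p k : ℕ}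
    (X : Ω → Fin p → ℝ) (hX : ∀ i, MemLp (fun ω => X ω i) 2 μ)
    (m : Fin p → ℝ) (hm : m = fun i => ∫ ω, X ω i ∂μ)
    (Sig : Matrix (Fin p) (Fin p) ℝ)
    (hSig : Sig = Matrix.of fun i j => ∫ ω, (X ω i - m i) * (X ω j - m j) ∂μ)
    (hpos : Sig.PosDef) :
    (∃ (Z : Ω → Fin k → ℝ) (W : Matrix (Fin p) (Fin k) ℝ) (ε : Ω → Fin p → ℝ)
        (B : Matrix (Fin k) (Fin p) ℝ),
      (∀ j, MemLp (fun ω => Z ω j) 2 μ) ∧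
      (∀ i, MemLp (fun ω => ε ω i) 2 μ) ∧
      (∀ j, ∫ ω, Z ω j ∂μ = 0) ∧
      (∀ j l, ∫ ω, Z ω j * Z ω l ∂μ = if j = l then (1 : ℝ) else 0) ∧
      (∀ i, ∫ ω, ε ω i ∂μ = 0) ∧
      (∀ i i', i ≠ i' → ∫ ω, ε ω i * ε ω i' ∂μ = 0) ∧
      (∀ j i, ∫ ω, Z ω j * ε ω i ∂μ = 0) ∧
      (∀ᵐ ω ∂μ, ∀ i, X ω i = m i + W.mulVec (Z ω) i + ε ω i) ∧
      (∀ᵐ ω ∂μ, Z ω = B.mulVec fun i => X ω i - m i)) ↔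
    (∃ S : Finset (Fin p), S.card = k ∧
      ∃ (Wt : Matrix ↥(Sᶜ) ↥S ℝ) (εt : Ω → ↥(Sᶜ) → ℝ),
        (∀ j, MemLp (fun ω => εt ω j) 2 μ) ∧
        (∀ j, ∫ ω, εt ω j ∂μ = 0) ∧
        (∀ᵐ ω ∂μ, ∀ j : ↥(Sᶜ),
          X ω (j : Fin p) = m (j : Fin p) +
            Wt.mulVec (fun s : ↥S => X ω (s : Fin p) - m (s : Fin p)) j + εt ω j) ∧
        (∀ (s : ↥S) (j : ↥(Sᶜ)),
          ∫ ω, (X ω (s : Fin p) - m (s : Fin p)) * εt ω j ∂μ = 0) ∧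
        (∀ j l : ↥(Sᶜ), j ≠ l → ∫ ω, εt ω j * εt ω l ∂μ = 0) ∧
        (∀ j : ↥(Sᶜ), 0 < ∫ ω, (εt ω j) ^ 2 ∂μ)) := by
  have hcov : (crossMoment μ (fun ω => X ω - m) (fun ω => X ω - m)).PosDef := by
    subst hSig
    exact hpos
  exact ⟨IsComponentFactorModel.isSubsetFactorModel hX hcov,
    IsSubsetFactorModel.isComponentFactorModel hX hm hcov⟩
end

section
/- Let Σ ∈ R^{p×p} be positive semidefinite, U ⊂ [p], i ∉ U, and β = Σ_{•i} − Σ_{•U} Σ_U⁺ Σ_{U,i}, with β_i > 0. Writing Σ_R = Σ − Σ_{•U} Σ_U⁺ Σ_{U•} and Σ_R' = Σ − Σ_{•,U∪{i}} Σ_{U∪{i}}⁺ Σ_{U∪{i},•}, the squared Frobenius norms satisfy ‖Σ_R'‖_F² = ‖Σ_R‖_F² + ‖β‖₂⁴/β_i² − 2βᵀΣ_Rβ/β_i. -/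
open MeasureTheory Matrix

/-! Factor `Σ = XᵀX`. Then `Σ_{•U} Σ_U⁺ Σ_{U•} = Xᵀ P_U X`, where `P_U = X_U (X_Uᵀ X_U)⁺ X_Uᵀ` is
the orthogonal projection onto the span of the columns `x_j`, `j ∈ U`, of `X`. Hence
`Σ_R = Xᵀ (1 - P_U) X`, `β = Xᵀ r` with `r = (1 - P_U) x_i`, and `β_i = ‖r‖²`. Adjoining `x_i`
adds to the projection the one onto `r`, `P_{U∪{i}} = P_U + r rᵀ / ‖r‖²`, so
`Σ_R' = Σ_R - β βᵀ / β_i`, and the formula is the expansion of the Frobenius norm of this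
rank-one perturbation. -/

namespace Matrix

variable {k m n ι α : Type*}

section Columns

variable [Fintype m] [NonUnitalNonAssocSemiring α]

theorem col_mul (A : Matrix k m α) (B : Matrix m n α) (j : n) :
    (A * B).col j = A *ᵥ B.col j :=
  rfl

theorem mul_submatrix_eq_self_iff {A : Matrix k k α} {X : Matrix k n α} {f : ι → n} [Fintype k] :
    A * X.submatrix id f = X.submatrix id f ↔ ∀ j, A *ᵥ X.col (f j) = X.col (f j) :=
  ⟨fun h j => congrArg (col · j) h,
    fun h => ext_col fun j => (col_mul _ _ j).trans (h j)⟩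

end Columns

section MoorePenrose

variable [Fintype m] [Fintype n]

structure IsMoorePenroseInverse (A : Matrix m n ℝ) (B : Matrix n m ℝ) : Prop where
  mul_mul_left : A * B * A = A
  mul_mul_right : B * A * B = B
  transpose_mul_left : (A * B)ᵀ = A * B
  transpose_mul_right : (B * A)ᵀ = B * A

namespace IsMoorePenroseInverse

variable {A : Matrix m n ℝ} {B C : Matrix n m ℝ}

theorem transpose (h : IsMoorePenroseInverse A B) : IsMoorePenroseInverse Aᵀ Bᵀ where
  mul_mul_left := by
    simpa only [transpose_mul, Matrix.mul_assoc] using congrArg Matrix.transpose h.mul_mul_left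
  mul_mul_right := by
    simpa only [transpose_mul, Matrix.mul_assoc] using congrArg Matrix.transpose h.mul_mul_right
  transpose_mul_left := by rw [← transpose_mul, transpose_transpose, h.transpose_mul_right]
  transpose_mul_right := by rw [← transpose_mul, transpose_transpose, h.transpose_mul_left]

theorem unique (hB : IsMoorePenroseInverse A B) (hC : IsMoorePenroseInverse A C) : B = C := by
  have hBC : B = B * A * C := calc
    B = B * (A * B)ᵀ := by rw [hB.transpose_mul_left, ← Matrix.mul_assoc, hB.mul_mul_right]
    _ = B * (A * C * A * B)ᵀ := by rw [hC.mul_mul_left]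
    _ = B * ((A * B)ᵀ * (A * C)ᵀ) := by rw [← transpose_mul]; simp only [Matrix.mul_assoc]
    _ = B * A * B * A * C := by
      rw [hB.transpose_mul_left, hC.transpose_mul_left]; simp only [Matrix.mul_assoc]
    _ = B * A * C := by rw [hB.mul_mul_right]
  have hCB : C = B * A * C := calc
    C = (C * A)ᵀ * C := by rw [hC.transpose_mul_right, hC.mul_mul_right]
    _ = (C * (A * B * A))ᵀ * C := by rw [hB.mul_mul_left]
    _ = ((B * A)ᵀ * (C * A)ᵀ) * C := by rw [← transpose_mul]; simp only [Matrix.mul_assoc]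
    _ = B * A * (C * A * C) := by
      rw [hB.transpose_mul_right, hC.transpose_mul_right]; simp only [Matrix.mul_assoc]
    _ = B * A * C := by rw [hC.mul_mul_right]
  rw [hBC, ← hCB]

end IsMoorePenroseInverse

theorem isMoorePenroseInverse_mpinv {A : Matrix m n ℝ} (h : ∃ B, IsMoorePenroseInverse A B) :
    IsMoorePenroseInverse A (mpinv A) := by
  have h' : ∃ B : Matrix n m ℝ,
      A * B * A = A ∧ B * A * B = B ∧ (A * B)ᵀ = A * B ∧ (B * A)ᵀ = B * A :=
    h.imp fun B hB => ⟨hB.1, hB.2, hB.3, hB.4⟩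
  rw [mpinv, dif_pos h']
  obtain ⟨h₁, h₂, h₃, h₄⟩ := h'.choose_spec
  exact ⟨h₁, h₂, h₃, h₄⟩

end MoorePenrose

section Hermitian

variable [Fintype n] {A : Matrix n n ℝ}

/-- The Penrose equations reduce to `x * x⁻¹ * x = x` on the spectrum, which holds also at `0`
since `0⁻¹ = 0`. -/
theorem IsHermitian.isMoorePenroseInverse_cfc_inv [DecidableEq n] (hA : A.IsHermitian) :
    IsMoorePenroseInverse A (cfc (·⁻¹ : ℝ → ℝ) A) := by
  have hmul (f g : ℝ → ℝ) : cfc f A * cfc g A = cfc (fun x => f x * g x) A :=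
    (cfc_mul f g A ((finite_spectrum A).continuousOn _) ((finite_spectrum A).continuousOn _)).symm
  have hid : cfc (fun x : ℝ => x) A = A := cfc_id' ℝ A hA.isSelfAdjoint
  have hsymm (f : ℝ → ℝ) : (cfc f A)ᵀ = cfc f A := by
    rw [← conjTranspose_eq_transpose_of_trivial]
    exact cfc_predicate (p := IsSelfAdjoint) f A
  have hAB : A * cfc (·⁻¹ : ℝ → ℝ) A = cfc (fun x : ℝ => x * x⁻¹) A := by rw [← hmul, hid]
  have hBA : cfc (·⁻¹ : ℝ → ℝ) A * A = cfc (fun x : ℝ => x⁻¹ * x) A := by rw [← hmul, hid]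
  refine ⟨?_, ?_, by rw [hAB, hsymm], by rw [hBA, hsymm]⟩
  · rw [hAB]
    nth_rw 2 [← hid]
    rw [hmul]
    simp only [mul_inv_mul_cancel, hid]
  · rw [hBA, hmul]
    congr 1
    funext x
    simpa using mul_inv_mul_cancel x⁻¹

theorem IsHermitian.transpose_mpinv (hA : A.IsHermitian) : (mpinv A)ᵀ = mpinv A := by
  classical
  have h := isMoorePenroseInverse_mpinv ⟨_, hA.isMoorePenroseInverse_cfc_inv⟩
  have hAt : Aᵀ = A := by rw [← conjTranspose_eq_transpose_of_trivial, hA.eq]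
  exact (hAt ▸ h.transpose).unique h

end Hermitian

open scoped MatrixOrder in
theorem PosSemidef.exists_eq_transpose_mul_self_s18 [Fintype n] [DecidableEq n] {A : Matrix n n ℝ}
    (hA : A.PosSemidef) : ∃ X : Matrix n n ℝ, A = Xᵀ * X := by
  refine ⟨CFC.sqrt A, ?_⟩
  rw [← conjTranspose_eq_transpose_of_trivial, (CFC.sqrt_nonneg A).posSemidef.1.eq,
    CFC.sqrt_mul_sqrt_self A hA.nonneg]

theorem isHermitian_transpose_mul_self [Fintype k] (M : Matrix k m ℝ) : (Mᵀ * M).IsHermitian := by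
  simpa only [conjTranspose_eq_transpose_of_trivial] using isHermitian_conjTranspose_mul_self M

section GramProjection

variable [Fintype k] [Fintype m]

noncomputable def colSpaceProj (M : Matrix k m ℝ) : Matrix k k ℝ :=
  M * mpinv (Mᵀ * M) * Mᵀ

theorem isMoorePenroseInverse_mpinv_transpose_mul_self (M : Matrix k m ℝ) :
    IsMoorePenroseInverse (Mᵀ * M) (mpinv (Mᵀ * M)) := by
  classical
  exact isMoorePenroseInverse_mpinv
    ⟨_, (isHermitian_transpose_mul_self M).isMoorePenroseInverse_cfc_inv⟩

theorem transpose_colSpaceProj (M : Matrix k m ℝ) : (colSpaceProj M)ᵀ = colSpaceProj M := by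
  simp only [colSpaceProj, transpose_mul, transpose_transpose,
    (isHermitian_transpose_mul_self M).transpose_mpinv, Matrix.mul_assoc]

/-- `E = P M - M` satisfies `Mᵀ E = 0` by the first Penrose equation, hence `Eᵀ E = 0`. -/
theorem colSpaceProj_mul_self (M : Matrix k m ℝ) : colSpaceProj M * M = M := by
  set E := colSpaceProj M * M - M
  have hME : Mᵀ * E = 0 := by
    have : Mᵀ * (colSpaceProj M * M) = Mᵀ * M * mpinv (Mᵀ * M) * (Mᵀ * M) := by
      simp only [colSpaceProj, Matrix.mul_assoc]
    rw [Matrix.mul_sub, this, (isMoorePenroseInverse_mpinv_transpose_mul_self M).mul_mul_left,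
      sub_self]
  have hEE : Eᵀ * E = 0 := calc
    Eᵀ * E = Mᵀ * (M * (mpinv (Mᵀ * M))ᵀ * (Mᵀ * E)) - Mᵀ * E := by
      simp only [E, colSpaceProj, transpose_sub, transpose_mul, transpose_transpose, Matrix.sub_mul,
        Matrix.mul_assoc]
    _ = 0 := by rw [hME, Matrix.mul_zero, Matrix.mul_zero, sub_zero]
  rw [← conjTranspose_eq_transpose_of_trivial, conjTranspose_mul_self_eq_zero] at hEE
  exact sub_eq_zero.mp hEE

theorem mul_colSpaceProj_of_mul_eq {A : Matrix k k ℝ} {M : Matrix k m ℝ} (h : A * M = M) :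
    A * colSpaceProj M = colSpaceProj M := by
  rw [colSpaceProj, ← Matrix.mul_assoc, ← Matrix.mul_assoc, h]

theorem colSpaceProj_mul_colSpaceProj (M : Matrix k m ℝ) :
    colSpaceProj M * colSpaceProj M = colSpaceProj M :=
  mul_colSpaceProj_of_mul_eq (colSpaceProj_mul_self M)

end GramProjection

section Projection

variable [Fintype k] {P : Matrix k k ℝ}

theorem mulVec_sub_mulVec_self (hPP : P * P = P) (x : k → ℝ) : P *ᵥ (x - P *ᵥ x) = 0 := by
  rw [mulVec_sub, mulVec_mulVec, hPP, sub_self]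

theorem sub_mulVec_self_dotProduct_mulVec (hP : Pᵀ = P) (hPP : P * P = P) (x y : k → ℝ) :
    (x - P *ᵥ x) ⬝ᵥ P *ᵥ y = 0 := by
  rw [dotProduct_mulVec, ← mulVec_transpose, hP, mulVec_sub_mulVec_self hPP, zero_dotProduct]

theorem sub_mulVec_self_dotProduct_self (hP : Pᵀ = P) (hPP : P * P = P) (x : k → ℝ) :
    (x - P *ᵥ x) ⬝ᵥ x = (x - P *ᵥ x) ⬝ᵥ (x - P *ᵥ x) := by
  rw [dotProduct_sub, sub_mulVec_self_dotProduct_mulVec hP hPP, sub_zero]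

variable {x r : k → ℝ}

theorem rankOne_update_mulVec_self (hP : Pᵀ = P) (hPP : P * P = P) (hr : r = x - P *ᵥ x) :
    (P + (r ⬝ᵥ r)⁻¹ • vecMulVec r r) *ᵥ x = x := by
  have hrx : r ⬝ᵥ x = r ⬝ᵥ r := hr ▸ sub_mulVec_self_dotProduct_self hP hPP x
  have hr_smul : (r ⬝ᵥ r)⁻¹ • (r ⬝ᵥ r) • r = r := by
    rcases eq_or_ne (r ⬝ᵥ r) 0 with h | h
    · rw [dotProduct_self_eq_zero.1 h, smul_zero, smul_zero]
    · rw [inv_smul_smul₀ h]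
  rw [add_mulVec, smul_mulVec, vecMulVec_mulVec, op_smul_eq_smul, hrx, hr_smul, hr,
    add_sub_cancel]

theorem rankOne_update_mulVec_of_mulVec_eq (hP : Pᵀ = P) (hPP : P * P = P)
    (hr : r = x - P *ᵥ x) {y : k → ℝ} (hy : P *ᵥ y = y) :
    (P + (r ⬝ᵥ r)⁻¹ • vecMulVec r r) *ᵥ y = y := by
  have hry : r ⬝ᵥ y = 0 := by rw [← hy, hr, sub_mulVec_self_dotProduct_mulVec hP hPP]
  rw [add_mulVec, smul_mulVec, vecMulVec_mulVec, op_smul_eq_smul, hry, zero_smul, smul_zero,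
    add_zero, hy]

end Projection

/-- Both sides are symmetric and each fixes the columns of the other, hence they coincide. -/
theorem colSpaceProj_submatrix_insert [Fintype k] [DecidableEq n] (X : Matrix k n ℝ) (S : Finset n)
    (i : n) {r : k → ℝ}
    (hr : r = X.col i - colSpaceProj (X.submatrix id ((↑) : S → n)) *ᵥ X.col i) :
    colSpaceProj (X.submatrix id ((↑) : ↥(insert i S) → n)) =
      colSpaceProj (X.submatrix id ((↑) : S → n)) + (r ⬝ᵥ r)⁻¹ • vecMulVec r r := by
  set P := colSpaceProj (X.submatrix id ((↑) : S → n))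
  set Q := colSpaceProj (X.submatrix id ((↑) : ↥(insert i S) → n))
  set R := P + (r ⬝ᵥ r)⁻¹ • vecMulVec r r
  have hP : Pᵀ = P := transpose_colSpaceProj _
  have hPP : P * P = P := colSpaceProj_mul_colSpaceProj _
  have hPfix : ∀ j : S, P *ᵥ X.col j = X.col j :=
    mul_submatrix_eq_self_iff.1 (colSpaceProj_mul_self _)
  have hQfix : ∀ j : ↥(insert i S), Q *ᵥ X.col j = X.col j :=
    mul_submatrix_eq_self_iff.1 (colSpaceProj_mul_self _)
  have hQP : Q * P = P := mul_colSpaceProj_of_mul_eq <| mul_submatrix_eq_self_iff.2 fun j =>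
    hQfix ⟨j, Finset.mem_insert_of_mem j.2⟩
  have hQr : Q *ᵥ r = r := by
    rw [hr, mulVec_sub, mulVec_mulVec, hQP, hQfix ⟨i, Finset.mem_insert_self i S⟩]
  have hQR : Q * R = R := by rw [Matrix.mul_add, hQP, Matrix.mul_smul, mul_vecMulVec, hQr]
  have hRQ : R * Q = Q := mul_colSpaceProj_of_mul_eq <| mul_submatrix_eq_self_iff.2 fun j => by
    rcases Finset.mem_insert.1 j.2 with hj | hj
    · rw [hj]
      exact rankOne_update_mulVec_self hP hPP hr
    · exact rankOne_update_mulVec_of_mulVec_eq hP hPP hr (hPfix ⟨j, hj⟩)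
  have hR : Rᵀ = R := by rw [transpose_add, transpose_smul, transpose_vecMulVec, hP]
  calc Q = (R * Q)ᵀ := by rw [hRQ, transpose_colSpaceProj]
    _ = Q * R := by rw [transpose_mul, transpose_colSpaceProj, hR]
    _ = R := hQR

theorem transpose_mul_self_submatrix_mul_mpinv_mul_submatrix [Fintype k] [Fintype ι]
    (X : Matrix k n ℝ) (f : ι → n) :
    (Xᵀ * X).submatrix id f * mpinv ((Xᵀ * X).submatrix f f) * (Xᵀ * X).submatrix f id =
      Xᵀ * colSpaceProj (X.submatrix id f) * X := by
  have hl : (Xᵀ * X).submatrix id f = Xᵀ * X.submatrix id f := by ext; simp [mul_apply]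
  have hr : (Xᵀ * X).submatrix f id = (X.submatrix id f)ᵀ * X := by ext; simp [mul_apply]
  have hc : (Xᵀ * X).submatrix f f = (X.submatrix id f)ᵀ * X.submatrix id f := by
    ext; simp [mul_apply]
  rw [hl, hr, hc, colSpaceProj]
  simp only [Matrix.mul_assoc]

theorem trace_transpose_mul_self_sub_smul_vecMulVec [Fintype n] (A : Matrix n n ℝ) (v : n → ℝ)
    (c : ℝ) :
    trace ((A - c⁻¹ • vecMulVec v v)ᵀ * (A - c⁻¹ • vecMulVec v v)) =
      trace (Aᵀ * A) + (∑ j, v j ^ 2) ^ 2 / c ^ 2 - 2 * (v ⬝ᵥ A *ᵥ v) / c := by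
  have h₁ : trace (Aᵀ * vecMulVec v v) = v ⬝ᵥ A *ᵥ v := by
    rw [mul_vecMulVec, trace_vecMulVec, mulVec_transpose, dotProduct_mulVec]
  have h₂ : trace (vecMulVec v v * A) = v ⬝ᵥ A *ᵥ v := by
    rw [vecMulVec_mul, trace_vecMulVec, dotProduct_comm, dotProduct_mulVec]
  have h₃ : trace (vecMulVec v v * vecMulVec v v) = (∑ j, v j ^ 2) ^ 2 := by
    rw [vecMulVec_mul_vecMulVec, trace_vecMulVec, dotProduct_smul, smul_eq_mul]
    simp only [dotProduct, sq]
  rw [transpose_sub, transpose_smul, transpose_vecMulVec]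
  simp only [Matrix.sub_mul, Matrix.mul_sub, Matrix.smul_mul, Matrix.mul_smul, trace_sub,
    trace_smul, smul_eq_mul, h₁, h₂, h₃]
  ring

end Matrix

theorem frobenius_residual_update_general {p : ℕ} (Sig : Matrix (Fin p) (Fin p) ℝ)
    (hSig : Sig.PosSemidef)
    (U : Finset (Fin p)) (i : Fin p)
    (SigR SigR' : Matrix (Fin p) (Fin p) ℝ)
    (hR : SigR = Sig - Sig.submatrix id (fun j : ↥U => (j : Fin p)) *
        mpinv (Sig.submatrix (fun j : ↥U => (j : Fin p)) (fun j : ↥U => (j : Fin p))) *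
        Sig.submatrix (fun j : ↥U => (j : Fin p)) id)
    (hR' : SigR' = Sig -
        Sig.submatrix id (fun j : ↥(insert i U) => (j : Fin p)) *
          mpinv (Sig.submatrix (fun j : ↥(insert i U) => (j : Fin p))
            (fun j : ↥(insert i U) => (j : Fin p))) *
          Sig.submatrix (fun j : ↥(insert i U) => (j : Fin p)) id)
    (β : Fin p → ℝ) (hβ : β = fun j => SigR j i) :
    Matrix.trace (SigR'ᵀ * SigR') =
      Matrix.trace (SigRᵀ * SigR) +
        (∑ j, β j ^ 2) ^ 2 / β i ^ 2 - 2 * (β ⬝ᵥ SigR.mulVec β) / β i := by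
  obtain ⟨X, rfl⟩ := hSig.exists_eq_transpose_mul_self_s18
  set P := colSpaceProj (X.submatrix id ((↑) : U → Fin p))
  have hP : Pᵀ = P := transpose_colSpaceProj _
  have hPP : P * P = P := colSpaceProj_mul_colSpaceProj _
  set r := X.col i - P *ᵥ X.col i with hr
  have hSigR : SigR = Xᵀ * (1 - P) * X := by
    rw [hR, transpose_mul_self_submatrix_mul_mpinv_mul_submatrix, Matrix.mul_sub,
      Matrix.sub_mul, Matrix.mul_one]
  have hβr : β = Xᵀ *ᵥ r := by
    rw [hβ, ← col_apply', hSigR, col_mul, ← mulVec_mulVec, sub_mulVec, one_mulVec]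
  have hβi : β i = r ⬝ᵥ r := by
    rw [hβr, mulVec_transpose, vecMul]
    exact sub_mulVec_self_dotProduct_self hP hPP (X.col i)
  have hSigR' : SigR' = SigR - (β i)⁻¹ • vecMulVec β β := by
    rw [hR', transpose_mul_self_submatrix_mul_mpinv_mul_submatrix,
      colSpaceProj_submatrix_insert X U i hr, hSigR, hβi, hβr, Matrix.mul_add, Matrix.add_mul,
      Matrix.mul_smul, Matrix.smul_mul, mul_vecMulVec, vecMulVec_mul, ← mulVec_transpose]
    noncomm_ring
  rw [hSigR', trace_transpose_mul_self_sub_smul_vecMulVec]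

/-- **Frobenius norm residual update.** For positive semidefinite `Σ`,
`U ⊂ [p]`, `i ∉ U`, and `β = Σ_{•i} − Σ_{•U} Σ_U⁺ Σ_{U,i}` with `β_i > 0`,
the residual covariances `Σ_R = Σ − Σ_{•U} Σ_U⁺ Σ_{U•}` and
`Σ_R' = Σ − Σ_{•,U∪{i}} Σ_{U∪{i}}⁺ Σ_{U∪{i},•}` satisfy
`‖Σ_R'‖_F² = ‖Σ_R‖_F² + ‖β‖₂⁴/β_i² − 2βᵀΣ_Rβ/β_i`. -/
theorem frobenius_residual_update {p : ℕ} (Sig : Matrix (Fin p) (Fin p) ℝ)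
    (hSig : Sig.PosSemidef)
    (U : Finset (Fin p)) (i : Fin p) (hi : i ∉ U)
    (SigR SigR' : Matrix (Fin p) (Fin p) ℝ)
    (hR : SigR = Sig - Sig.submatrix id (fun j : ↥U => (j : Fin p)) *
        mpinv (Sig.submatrix (fun j : ↥U => (j : Fin p)) (fun j : ↥U => (j : Fin p))) *
        Sig.submatrix (fun j : ↥U => (j : Fin p)) id)
    (hR' : SigR' = Sig -
        Sig.submatrix id (fun j : ↥(insert i U) => (j : Fin p)) *
          mpinv (Sig.submatrix (fun j : ↥(insert i U) => (j : Fin p))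
            (fun j : ↥(insert i U) => (j : Fin p))) *
          Sig.submatrix (fun j : ↥(insert i U) => (j : Fin p)) id)
    (β : Fin p → ℝ) (hβ : β = fun j => SigR j i) (hβi : 0 < β i) :
    Matrix.trace (SigR'ᵀ * SigR') =
      Matrix.trace (SigRᵀ * SigR) +
        (∑ j, β j ^ 2) ^ 2 / β i ^ 2 - 2 * (β ⬝ᵥ SigR.mulVec β) / β i :=
  frobenius_residual_update_general Sig hSig U i SigR SigR' hR hR' β hβ
end
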